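/- arXiv:nlin/0606039 — 5 statements merged into one kernel-verified Lean document; each statement's English description precedes it below -/
import Mathlib

section
/- Let q be a real number with q > 0 and q ≠ 1, let n be a natural number, and let f, g : ℝ → ℝ. Then for every real x ≠ 0 the general q-Leibniz rule holds: (∂_q^n(f·g))(x) = Σ_{k=0}^{n} [n choose k]_q · (∂_q^k f)(q^{n−k} x) · (∂_q^{n−k} g)(x). -/
/-- The `q`-derivative: `(∂_q f)(x) = (f(qx) − f(x))/(x(q−1))` (zero at `x = 0`). -/
noncomputable def qDeriv (q : ℝ) (f : ℝ → ℝ) : ℝ → ℝ :=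
  fun x => (f (q * x) - f x) / (x * (q - 1))

/-- The q-number `(m)_q = (q^m − 1)/(q − 1)` for an integer `m`. -/
noncomputable def qNum (q : ℝ) (m : ℤ) : ℝ := (q ^ m - 1) / (q - 1)

/-- The q-factorial `(k)_q! = (k)_q (k−1)_q ⋯ (1)_q`, with `(0)_q! = 1`. -/
noncomputable def qFactorial (q : ℝ) (k : ℕ) : ℝ :=
  ∏ i ∈ Finset.range k, qNum q ((i : ℤ) + 1)

/-- The q-binomial coefficient `[n choose k]_q = (n)_q (n−1)_q ⋯ (n−k+1)_q / (k)_q!`. -/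
noncomputable def qBinom (q : ℝ) (n : ℤ) (k : ℕ) : ℝ :=
  (∏ i ∈ Finset.range k, qNum q (n - (i : ℤ))) / qFactorial q k

/-!
`∂_q` obeys the product rule `∂_q(FG)(x) = F(qx) ∂_q G(x) + ∂_q F(x) G(x)` and the chain rule
`∂_q(F(c·))(x) = c (∂_q F)(cx)`, so applying `∂_q` to the `n`-th formula splits every term in two;
the q-Pascal rule `[n+1, k+1]_q = [n, k+1]_q + q^(n-k) [n, k]_q`, which comes from
`(n+1)_q = (n-k)_q + q^(n-k) (k+1)_q`, recombines the pieces into the `(n+1)`-st formula.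
Since `qDeriv` is `0` at `0` and so is every term of the sum there, these rules, and hence
the formula, hold at `x = 0` too, so the induction runs on an identity of functions.
-/

open Finset

lemma qDeriv_mul (q : ℝ) (f g : ℝ → ℝ) (x : ℝ) :
    qDeriv q (fun y => f y * g y) x = f (q * x) * qDeriv q g x + qDeriv q f x * g x := by
  simp only [qDeriv]
  ring

lemma qDeriv_const_mul (q c : ℝ) (f : ℝ → ℝ) (x : ℝ) :
    qDeriv q (fun y => c * f y) x = c * qDeriv q f x := by
  simp only [qDeriv]
  ring

lemma qDeriv_sum {ι : Type*} (q : ℝ) (s : Finset ι) (f : ι → ℝ → ℝ) (x : ℝ) :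
    qDeriv q (fun y => ∑ i ∈ s, f i y) x = ∑ i ∈ s, qDeriv q (f i) x := by
  simp only [qDeriv, ← sum_sub_distrib, sum_div]

lemma qDeriv_comp_mul_left (q c : ℝ) (f : ℝ → ℝ) (x : ℝ) :
    qDeriv q (fun y => f (c * y)) x = c * qDeriv q f (c * x) := by
  rcases eq_or_ne c 0 with rfl | hc
  · simp [qDeriv]
  · simp only [qDeriv]
    rw [mul_left_comm c q x, ← mul_div_assoc, mul_assoc c x, mul_div_mul_left _ _ hc]

lemma qDeriv_comp_pow_mul_mul (q : ℝ) (m : ℕ) (f g : ℝ → ℝ) (x : ℝ) :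
    qDeriv q (fun y => f (q ^ m * y) * g y) x =
      f (q ^ (m + 1) * x) * qDeriv q g x + q ^ m * qDeriv q f (q ^ m * x) * g x := by
  rw [qDeriv_mul, qDeriv_comp_mul_left, pow_succ, mul_assoc (q ^ m) q x]

section qArith

variable {q : ℝ}

lemma qNum_add (hq0 : q ≠ 0) (hq1 : q ≠ 1) (m n : ℤ) :
    qNum q (m + n) = qNum q m + q ^ m * qNum q n := by
  have : q - 1 ≠ 0 := sub_ne_zero.2 hq1
  simp only [qNum, zpow_add₀ hq0]
  field_simp
  ring

lemma qNum_natCast_ne_zero (hq0 : 0 < q) (hq1 : q ≠ 1) {k : ℕ} (hk : k ≠ 0) :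
    qNum q k ≠ 0 := by
  rw [qNum, zpow_natCast]
  exact div_ne_zero (sub_ne_zero.2 fun h => hq1 ((pow_eq_one_iff_of_nonneg hq0.le hk).1 h))
    (sub_ne_zero.2 hq1)

lemma qFactorial_succ (q : ℝ) (k : ℕ) :
    qFactorial q (k + 1) = qFactorial q k * qNum q (k + 1) :=
  prod_range_succ _ _

lemma qFactorial_ne_zero (hq0 : 0 < q) (hq1 : q ≠ 1) (k : ℕ) : qFactorial q k ≠ 0 :=
  prod_ne_zero_iff.2 fun i _ => by exact_mod_cast qNum_natCast_ne_zero hq0 hq1 i.succ_ne_zero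

@[simp]
lemma qBinom_zero (q : ℝ) (n : ℤ) : qBinom q n 0 = 1 := by
  simp [qBinom, qFactorial]

lemma qBinom_natCast_succ_self (q : ℝ) (n : ℕ) : qBinom q n (n + 1) = 0 := by
  rw [qBinom, prod_eq_zero (self_mem_range_succ n) (by simp [qNum]), zero_div]

lemma qBinom_succ_succ (hq0 : 0 < q) (hq1 : q ≠ 1) (n : ℤ) (k : ℕ) :
    qBinom q (n + 1) (k + 1) = qBinom q n (k + 1) + q ^ (n - k) * qBinom q n k := by
  have hF := qFactorial_ne_zero hq0 hq1 k
  have hN : qNum q ((k : ℤ) + 1) ≠ 0 := by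
    exact_mod_cast qNum_natCast_ne_zero hq0 hq1 k.succ_ne_zero
  have hpascal : qNum q (n + 1) = qNum q (n - k) + q ^ (n - k) * qNum q (k + 1) := by
    rw [← qNum_add hq0.ne' hq1]
    ring_nf
  simp only [qBinom, qFactorial_succ, prod_range_succ,
    prod_range_succ' (fun i => qNum q (n + 1 - i)), Nat.cast_add, Nat.cast_one, Nat.cast_zero,
    sub_zero, add_sub_add_right_eq_sub, hpascal]
  field_simp

lemma sum_range_qBinom_succ_mul (hq0 : 0 < q) (hq1 : q ≠ 1) (n : ℕ) (T : ℕ → ℝ) :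
    ∑ k ∈ range (n + 1 + 1), qBinom q ↑(n + 1) k * T k =
      ∑ k ∈ range (n + 1), qBinom q n k * T k +
        ∑ k ∈ range (n + 1), q ^ (n - k) * qBinom q n k * T (k + 1) := by
  have hpascal : ∀ k ∈ range (n + 1), qBinom q (n + 1) (k + 1) * T (k + 1) =
      qBinom q n (k + 1) * T (k + 1) + q ^ (n - k) * qBinom q n k * T (k + 1) := by
    intro k hk
    rw [qBinom_succ_succ hq0 hq1, ← Nat.cast_sub (mem_range_succ_iff.1 hk), zpow_natCast]
    ring
  push_cast
  rw [sum_range_succ', sum_congr rfl hpascal, sum_add_distrib, sum_range_succ,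
    qBinom_natCast_succ_self, sum_range_succ' (fun k => qBinom q n k * T k)]
  simp only [qBinom_zero]
  ring

end qArith

/-- The general q-Leibniz rule:
`(∂_q^n(f·g))(x) = Σ_{k=0}^{n} [n choose k]_q (∂_q^k f)(q^{n−k} x) (∂_q^{n−k} g)(x)`. -/
theorem qDeriv_iterate_mul (q : ℝ) (hq0 : 0 < q) (hq1 : q ≠ 1) (n : ℕ) (f g : ℝ → ℝ) :
    ∀ x : ℝ, x ≠ 0 →
      (qDeriv q)^[n] (fun y => f y * g y) x =
        ∑ k ∈ Finset.range (n + 1),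
          qBinom q (n : ℤ) k * (qDeriv q)^[k] f (q ^ (n - k) * x) * (qDeriv q)^[n - k] g x := by
  suffices h : (qDeriv q)^[n] (fun y => f y * g y) = fun x => ∑ k ∈ range (n + 1),
      qBinom q n k * (qDeriv q)^[k] f (q ^ (n - k) * x) * (qDeriv q)^[n - k] g x from
    fun x _ => congrFun h x
  induction n with
  | zero => funext x; simp
  | succ n ih =>
    funext x
    simp only [mul_assoc]
    rw [Function.iterate_succ_apply', ih, qDeriv_sum, sum_range_qBinom_succ_mul hq0 hq1 n
      (fun k => (qDeriv q)^[k] f (q ^ (n + 1 - k) * x) * (qDeriv q)^[n + 1 - k] g x)]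
    simp only [mul_assoc, qDeriv_const_mul, qDeriv_comp_pow_mul_mul, mul_add, sum_add_distrib]
    congr 1
    · refine sum_congr rfl fun k hk => ?_
      rw [Nat.sub_add_comm (mem_range_succ_iff.1 hk), Function.iterate_succ_apply']
    · refine sum_congr rfl fun k _ => ?_
      rw [Nat.add_sub_add_right, Function.iterate_succ_apply']
      ring
end

section
/- Let q be a real number with 0 < q < 1. In the ring of formal power series over ℝ in one variable X, the q-exponential series e_q(X) = Σ_{n≥0} X^n/(n)_q! equals the exponential of the series S = Σ_{k≥1} ((1−q)^k/(k(1−q^k))) X^k; that is, e_q(X) = Σ_{m≥0} S^m/m! (this sum of powers of S converges coefficientwise since S has zero constant term). -/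
/-- The q-exponential as a formal power series: `e_q(X) = Σ_{n≥0} X^n/(n)_q!`. -/
noncomputable def qExp (q : ℝ) : PowerSeries ℝ :=
  PowerSeries.mk fun n => 1 / qFactorial q n

/-- The series `S = Σ_{k≥1} ((1−q)^k/(k(1−q^k))) X^k`. -/
noncomputable def qExpLog (q : ℝ) : PowerSeries ℝ :=
  PowerSeries.mk fun k => if k = 0 then 0 else (1 - q) ^ k / (k * (1 - q ^ k))

open Finset PowerSeries
open scoped Nat

namespace PowerSeries

section CommRing

variable {R : Type*} [CommRing R]

theorem coeff_pow_eq_zero_of_lt {F : R⟦X⟧} (hF : constantCoeff F = 0) {n m : ℕ} (h : n < m) :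
    coeff n (F ^ m) = 0 :=
  coeff_of_lt_order n ((Nat.cast_lt.2 h).trans_le (le_order_pow_of_constantCoeff_eq_zero m hF))

@[simp]
theorem constantCoeff_rescale (a : R) (f : R⟦X⟧) :
    constantCoeff (rescale a f) = constantCoeff f := by
  rw [← coeff_zero_eq_constantCoeff_apply, coeff_rescale, pow_zero, one_mul,
    coeff_zero_eq_constantCoeff_apply]

theorem rescale_subst {F : R⟦X⟧} (hF : HasSubst F) (a : R) (f : R⟦X⟧) :
    rescale a (f.subst F) = f.subst (rescale a F) := by
  rw [rescale_eq_subst, rescale_eq_subst, subst_comp_subst_apply hF (HasSubst.smul_X' a)]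

theorem coeff_succ_mul_one_sub_C_mul_X (F : R⟦X⟧) (c : R) (n : ℕ) :
    coeff (n + 1) (F * (1 - C c * X)) = coeff (n + 1) F - c * coeff n F := by
  rw [mul_sub, mul_one, mul_comm, mul_assoc, map_sub, coeff_C_mul, coeff_succ_X_mul]

theorem one_sub_C_mul_X_mul_mk_pow (c : R) : (1 - C c * X) * mk (c ^ ·) = 1 := by
  have := congrArg (rescale c) (mk_one_mul_one_sub_eq_one (S := R))
  rw [map_mul, map_sub, map_one, rescale_X, rescale_mk] at this
  rw [mul_comm]
  simpa using this

theorem eq_of_derivative_eq_mul [IsAddTorsionFree R] {B F G : R⟦X⟧}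
    (hF : d⁄dX R F = B * F) (hG : d⁄dX R G = B * G) (h0 : constantCoeff F = constantCoeff G) :
    F = G := by
  ext n
  induction n using Nat.strong_induction_on with
  | _ n ih =>
    cases n with
    | zero => simpa using h0
    | succ n =>
      have hBF : coeff n (B * F) = coeff n (B * G) := by
        rw [coeff_mul, coeff_mul]
        refine sum_congr rfl fun p hp => ?_
        rw [ih p.2 (by have := mem_antidiagonal.mp hp; omega)]
      have h : coeff (n + 1) F * (n + 1 : ℕ) = coeff (n + 1) G * (n + 1 : ℕ) := by
        rw [Nat.cast_succ, ← coeff_derivative, ← coeff_derivative, hF, hG, hBF]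
      simp only [mul_comm _ ((n + 1 : ℕ) : R), ← nsmul_eq_mul] at h
      exact (smul_right_inj n.succ_ne_zero).mp h

theorem eq_of_rescale_eq_mul_one_sub_C_mul_X [IsDomain R] {q c : R}
    (hq : ∀ n : ℕ, q ^ (n + 1) ≠ 1) {F G : R⟦X⟧}
    (hF : rescale q F = F * (1 - C c * X)) (hG : rescale q G = G * (1 - C c * X))
    (h0 : constantCoeff F = constantCoeff G) : F = G := by
  have hrec : ∀ {H : R⟦X⟧}, rescale q H = H * (1 - C c * X) → ∀ n : ℕ,
      (1 - q ^ (n + 1)) * coeff (n + 1) H = c * coeff n H := by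
    intro H hH n
    have := congrArg (coeff (n + 1)) hH
    rw [coeff_rescale, coeff_succ_mul_one_sub_C_mul_X] at this
    linear_combination -this
  ext n
  induction n with
  | zero => simpa using h0
  | succ n ih =>
    exact mul_left_cancel₀ (sub_ne_zero.2 (hq n).symm) (by rw [hrec hF, hrec hG, ih])

end CommRing

variable {K : Type*} [Field K] [CharZero K]

theorem coeff_exp_subst {F : K⟦X⟧} (hF : constantCoeff F = 0) (n : ℕ) :
    coeff n ((exp K).subst F) = ∑ m ∈ range (n + 1), coeff n (F ^ m) / m ! := by
  rw [coeff_subst' (HasSubst.of_constantCoeff_zero' hF),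
    finsum_eq_sum_of_support_subset (s := range (n + 1)) _ ?_]
  · simp [coeff_exp, div_eq_inv_mul]
  · intro m hm
    by_contra hmn
    exact hm (by simp [coeff_pow_eq_zero_of_lt hF (by simpa using hmn : n < m)])

theorem constantCoeff_exp_subst {F : K⟦X⟧} (hF : constantCoeff F = 0) :
    constantCoeff ((exp K).subst F) = 1 := by
  simpa using coeff_exp_subst hF 0

theorem derivative_exp_subst {F : K⟦X⟧} (hF : HasSubst F) :
    d⁄dX K ((exp K).subst F) = d⁄dX K F * (exp K).subst F := by
  rw [derivative_subst hF, derivative_exp, mul_comm]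

end PowerSeries

theorem qNum_natCast_add_one (q : ℝ) (n : ℕ) :
    qNum q ((n : ℤ) + 1) = (q ^ (n + 1) - 1) / (q - 1) := by
  rw [qNum, ← Nat.cast_succ, zpow_natCast]

theorem qFactorial_succ_s6 (q : ℝ) (n : ℕ) :
    qFactorial q (n + 1) = qFactorial q n * ((q ^ (n + 1) - 1) / (q - 1)) := by
  rw [qFactorial, prod_range_succ, ← qFactorial, qNum_natCast_add_one]

theorem qFactorial_ne_zero_s6 {q : ℝ} (hq : ∀ n : ℕ, q ^ (n + 1) ≠ 1) (n : ℕ) :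
    qFactorial q n ≠ 0 := by
  have hq1 : q - 1 ≠ 0 := sub_ne_zero.2 (by simpa using hq 0)
  refine prod_ne_zero_iff.2 fun i _ => ?_
  rw [qNum_natCast_add_one]
  exact div_ne_zero (sub_ne_zero.2 (hq i)) hq1

theorem rescale_qExp {q : ℝ} (hq : ∀ n : ℕ, q ^ (n + 1) ≠ 1) :
    rescale q (qExp q) = qExp q * (1 - C (1 - q) * X) := by
  ext (_ | n)
  · simp [qExp, qFactorial]
  · have hq1 : q - 1 ≠ 0 := sub_ne_zero.2 (by simpa using hq 0)
    have hqn : q ^ (n + 1) - 1 ≠ 0 := sub_ne_zero.2 (hq n)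
    have := qFactorial_ne_zero_s6 hq n
    rw [coeff_rescale, coeff_succ_mul_one_sub_C_mul_X, qExp, coeff_mk, coeff_mk, qFactorial_succ_s6]
    field_simp
    ring

theorem constantCoeff_qExpLog (q : ℝ) : constantCoeff (qExpLog q) = 0 := by
  rw [← coeff_zero_eq_constantCoeff_apply, qExpLog, coeff_mk, if_pos rfl]

theorem constantCoeff_qExp (q : ℝ) : constantCoeff (qExp q) = 1 := by
  rw [← coeff_zero_eq_constantCoeff_apply, qExp, coeff_mk, qFactorial, prod_range_zero, div_one]

/-- `S(qX) - S(X) = log (1 - (1 - q) X)`, in differentiated form. -/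
theorem one_sub_C_mul_X_mul_derivative_rescale_qExpLog {q : ℝ}
    (hq : ∀ n : ℕ, q ^ (n + 1) ≠ 1) :
    (1 - C (1 - q) * X) * d⁄dX ℝ (rescale q (qExpLog q)) =
      (1 - C (1 - q) * X) * d⁄dX ℝ (qExpLog q) - C (1 - q) := by
  have hL : d⁄dX ℝ (rescale q (qExpLog q) - qExpLog q) = -C (1 - q) * mk ((1 - q) ^ ·) := by
    ext j
    have hqj : 1 - q ^ (j + 1) ≠ 0 := sub_ne_zero.2 (hq j).symm
    rw [coeff_derivative, map_sub, coeff_rescale, qExpLog, coeff_mk, if_neg j.succ_ne_zero,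
      neg_mul, map_neg, coeff_C_mul, coeff_mk]
    push_cast
    field_simp
    ring
  have hgeom := one_sub_C_mul_X_mul_mk_pow (1 - q)
  rw [map_sub] at hL
  linear_combination (1 - C (1 - q) * X) * hL - C (1 - q) * hgeom

theorem rescale_exp_subst_qExpLog {q : ℝ} (hq : ∀ n : ℕ, q ^ (n + 1) ≠ 1) :
    rescale q ((exp ℝ).subst (qExpLog q)) =
      (exp ℝ).subst (qExpLog q) * (1 - C (1 - q) * X) := by
  have hS := HasSubst.of_constantCoeff_zero' (constantCoeff_qExpLog q)
  have hqS : HasSubst (rescale q (qExpLog q)) :=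
    HasSubst.of_constantCoeff_zero' (by rw [constantCoeff_rescale, constantCoeff_qExpLog])
  have hP : d⁄dX ℝ (1 - C (1 - q) * X) = -C (1 - q) := by
    simp [map_sub]
  refine eq_of_derivative_eq_mul (B := d⁄dX ℝ (rescale q (qExpLog q))) ?_ ?_ ?_
  · rw [rescale_subst hS, derivative_exp_subst hqS]
  · rw [Derivation.leibniz, derivative_exp_subst hS, smul_eq_mul, smul_eq_mul, hP]
    linear_combination (-(exp ℝ).subst (qExpLog q)) *
      one_sub_C_mul_X_mul_derivative_rescale_qExpLog hq
  · simp [constantCoeff_exp_subst (constantCoeff_qExpLog q)]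

/-- For `0 < q < 1`, the q-exponential equals the exponential of
`S = Σ_{k≥1} ((1−q)^k/(k(1−q^k))) X^k`, coefficientwise: the `n`-th coefficient of `e_q`
is `Σ_{m=0}^{n} (coeff n of S^m)/m!` (powers `S^m` with `m > n` contribute nothing since
`S` has zero constant term). -/
theorem qExp_eq_exp_qExpLog (q : ℝ) (hq0 : 0 < q) (hq1 : q < 1) :
    ∀ n : ℕ,
      PowerSeries.coeff n (qExp q) =
        ∑ m ∈ Finset.range (n + 1),
          PowerSeries.coeff n ((qExpLog q) ^ m) / (Nat.factorial m) := by
  have hq : ∀ n : ℕ, q ^ (n + 1) ≠ 1 := fun n => (pow_lt_one₀ hq0.le hq1 n.succ_ne_zero).ne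
  have h : qExp q = (exp ℝ).subst (qExpLog q) :=
    eq_of_rescale_eq_mul_one_sub_C_mul_X hq (rescale_qExp hq) (rescale_exp_subst_qExpLog hq)
      (by rw [constantCoeff_qExp, constantCoeff_exp_subst (constantCoeff_qExpLog q)])
  intro n
  rw [h, coeff_exp_subst (constantCoeff_qExpLog q)]
end

section
/- Let q be a real number with q ≠ 0 and q ≠ 1, let n ≥ 1, and let φ_1, …, φ_n, φ : ℝ → ℝ. Define recursively φ_j^{(0)} = φ_j and φ^{(0)} = φ, and for 1 ≤ i ≤ n set φ_j^{(i)} = D_{φ_i^{(i−1)}} φ_j^{(i−1)} for j > i and φ^{(i)} = D_{φ_i^{(i−1)}} φ^{(i−1)}. Assume that for each i = 1, …, n the q-Wronskian W_i^q(φ_1, …, φ_i)(x) ≠ 0 for all x ≠ 0. Then for every x ≠ 0, the n-fold Darboux transform of φ is the ratio of q-Wronskians: φ^{(n)}(x) = W_{n+1}^q(φ_1, …, φ_n, φ)(x) / W_n^q(φ_1, …, φ_n)(x). -/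
/-- The q-Wronskian `W_n^q(f_1,…,f_n)(x) = det((∂_q^{i−1} f_j)(x))`. -/
noncomputable def qWronskian (q : ℝ) (n : ℕ) (f : Fin n → ℝ → ℝ) (x : ℝ) : ℝ :=
  Matrix.det (Matrix.of fun i j : Fin n => (qDeriv q)^[(i : ℕ)] (f j) x)

/-- The Darboux transform generated by `h`: `(D_h g)(x) = h(qx)·(∂_q(g/h))(x)`. -/
noncomputable def qDarboux (q : ℝ) (h g : ℝ → ℝ) : ℝ → ℝ :=
  fun x => h (q * x) * qDeriv q (fun y => g y / h y) x

/-- The recursively Darboux-transformed family: `Φ_j^{(0)} = Φ j` and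
`Φ_j^{(i+1)} = D_{Φ_{i+1}^{(i)}} Φ_j^{(i)}` (generating functions are `Φ 1, Φ 2, …`). -/
noncomputable def qDarbouxFam (q : ℝ) (Φ : ℕ → ℝ → ℝ) : ℕ → ℕ → (ℝ → ℝ)
  | 0, j => Φ j
  | i + 1, j => qDarboux q (qDarbouxFam q Φ i (i + 1)) (qDarbouxFam q Φ i j)

/-!
Expanding `∂_q^i f (x)` in the shifts `f (q ^ k * x)`, `k ≤ i`, with a triangular coefficient
matrix factors the q-Wronskian as the product of the leading coefficients times the Casoratian
`det (f_j (q ^ i * x))`; so `W_{m+1}(φ_1, …, φ_m, φ) / W_m(φ_1, …, φ_m)` is, up to the leading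
coefficient of `∂_q^m`, a ratio of Casoratians. Since `D_h g = (h · θg − g · θh) / (x (q − 1) h)`,
one more Darboux step applied to two such ratios yields a 2 × 2 determinant of Casoratians taken
at `x` and `q x`, which the Desnanot–Jacobi identity for the Casoratian matrix (bordered by its
first and last rows) turns into the next ratio. Induction on the number of steps concludes.
-/

open Finset Matrix

section QCalculus

variable (q : ℝ)

/-- `qDerivCoeff q i k x` is the coefficient of `f (q ^ k * x)` in `(∂_q^i f)(x)`. -/
noncomputable def qDerivCoeff : ℕ → ℕ → ℝ → ℝ
  | 0, 0, _ => 1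
  | 0, _ + 1, _ => 0
  | i + 1, 0, x => -qDerivCoeff i 0 x / (x * (q - 1))
  | i + 1, k + 1, x => (qDerivCoeff i k (q * x) - qDerivCoeff i (k + 1) x) / (x * (q - 1))

theorem qDerivCoeff_eq_zero_of_lt {i k : ℕ} (x : ℝ) (h : i < k) : qDerivCoeff q i k x = 0 := by
  induction i generalizing k x with
  | zero => obtain ⟨k, rfl⟩ := Nat.exists_eq_succ_of_ne_zero h.ne'; rfl
  | succ i ih =>
    obtain ⟨k, rfl⟩ := Nat.exists_eq_succ_of_ne_zero (Nat.ne_zero_of_lt h)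
    rw [qDerivCoeff, ih _ (by omega), ih _ (by omega), sub_zero, zero_div]

theorem qDerivCoeff_succ_self (i : ℕ) (x : ℝ) :
    qDerivCoeff q (i + 1) (i + 1) x = qDerivCoeff q i i (q * x) / (x * (q - 1)) := by
  rw [qDerivCoeff, qDerivCoeff_eq_zero_of_lt q x i.lt_succ_self, sub_zero]

theorem qDerivCoeff_self_ne_zero (hq0 : q ≠ 0) (hq1 : q ≠ 1) (i : ℕ) {x : ℝ} (hx : x ≠ 0) :
    qDerivCoeff q i i x ≠ 0 := by
  induction i generalizing x with
  | zero => exact one_ne_zero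
  | succ i ih =>
    rw [qDerivCoeff_succ_self]
    exact div_ne_zero (ih (mul_ne_zero hq0 hx)) (mul_ne_zero hx (sub_ne_zero.2 hq1))

theorem iterate_qDeriv_apply_eq_sum (hq0 : q ≠ 0) (f : ℝ → ℝ) {i N : ℕ} (hiN : i < N) {x : ℝ}
    (hx : x ≠ 0) :
    (qDeriv q)^[i] f x = ∑ k ∈ range N, qDerivCoeff q i k x * f (q ^ k * x) := by
  induction i generalizing N x with
  | zero =>
    obtain ⟨N, rfl⟩ := Nat.exists_eq_succ_of_ne_zero hiN.ne'
    simp [sum_range_succ', qDerivCoeff]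
  | succ i ih =>
    obtain ⟨N, rfl⟩ := Nat.exists_eq_succ_of_ne_zero (Nat.ne_zero_of_lt hiN)
    have hshift : ∀ k : ℕ, q ^ k * (q * x) = q ^ (k + 1) * x := fun k => by ring
    rw [Function.iterate_succ_apply', qDeriv, ih (N := N) (by omega) (mul_ne_zero hq0 hx),
      ih (N := N + 1) (by omega) hx, sum_range_succ', sum_range_succ']
    simp only [qDerivCoeff, hshift, div_mul_eq_mul_div, ← sum_div, ← add_div]
    congr 1
    simp only [sub_mul, sum_sub_distrib]
    ring

end QCalculus

section DesnanotJacobi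

variable {R α β : Type*} [CommRing R]

theorem Fin.snoc_comp_finSumFinEquiv {m : ℕ} (r : Fin m → α) (a : α) :
    (Fin.snoc r a : Fin (m + 1) → α) ∘ (finSumFinEquiv : Fin m ⊕ Fin 1 ≃ _) = Sum.elim r ![a] := by
  ext (i | i)
  · simp [Fin.snoc, Fin.castLT]
  · fin_cases i; simp [Fin.snoc]

theorem Fin.snoc_snoc_comp_finSumFinEquiv {m : ℕ} (r : Fin m → α) (a b : α) :
    (Fin.snoc (Fin.snoc r a) b : Fin (m + 2) → α) ∘ (finSumFinEquiv : Fin m ⊕ Fin 2 ≃ _) =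
      Sum.elim r ![a, b] := by
  ext (i | i)
  · simp [Fin.snoc, Fin.castLT]
  · fin_cases i <;> simp [Fin.snoc]

theorem Matrix.det_submatrix_comp_equiv {ι κ : Type*} [Fintype ι] [DecidableEq ι] [Fintype κ]
    [DecidableEq κ] (M : Matrix α β R) (e : ι ≃ κ) (r : κ → α) (c : κ → β) :
    (M.submatrix (r ∘ e) (c ∘ e)).det = (M.submatrix r c).det := by
  rw [← submatrix_submatrix, det_submatrix_equiv_self]

theorem Matrix.det_submatrix_sumElim {m k : Type*} [Fintype m] [DecidableEq m] [Fintype k]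
    [DecidableEq k] (M : Matrix α β R) (r : m → α) (c : m → β) (r' : k → α) (c' : k → β)
    [Invertible (M.submatrix r c)] :
    (M.submatrix (Sum.elim r r') (Sum.elim c c')).det =
      (M.submatrix r c).det *
        ((M - M.submatrix id c * ⅟(M.submatrix r c) * M.submatrix r id).submatrix r' c').det := by
  have hblocks : M.submatrix (Sum.elim r r') (Sum.elim c c') =
      fromBlocks (M.submatrix r c) (M.submatrix r c') (M.submatrix r' c) (M.submatrix r' c') := by
    ext (i | i) (j | j) <;> rfl
  rw [hblocks, det_fromBlocks₁₁]
  congr 2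

theorem Matrix.det_mul_det_submatrix_snoc_snoc {m : ℕ} (M : Matrix α β R) (r : Fin m → α)
    (c : Fin m → β) (a b : α) (c₁ c₂ : β) (hD : IsUnit (M.submatrix r c).det) :
    (M.submatrix (Fin.snoc (Fin.snoc r a) b) (Fin.snoc (Fin.snoc c c₁) c₂)).det *
        (M.submatrix r c).det =
      (M.submatrix (Fin.snoc r a) (Fin.snoc c c₁)).det *
          (M.submatrix (Fin.snoc r b) (Fin.snoc c c₂)).det -
        (M.submatrix (Fin.snoc r a) (Fin.snoc c c₂)).det *
          (M.submatrix (Fin.snoc r b) (Fin.snoc c c₁)).det := by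
  have := (M.submatrix r c).invertibleOfIsUnitDet hD
  have hbig : (M.submatrix (Fin.snoc (Fin.snoc r a) b) (Fin.snoc (Fin.snoc c c₁) c₂)).det =
      (M.submatrix (Sum.elim r ![a, b]) (Sum.elim c ![c₁, c₂])).det := by
    rw [← Fin.snoc_snoc_comp_finSumFinEquiv, ← Fin.snoc_snoc_comp_finSumFinEquiv,
      det_submatrix_comp_equiv]
  have hone : ∀ x y, (M.submatrix (Fin.snoc r x) (Fin.snoc c y)).det =
      (M.submatrix (Sum.elim r ![x]) (Sum.elim c ![y])).det := fun x y => by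
    rw [← Fin.snoc_comp_finSumFinEquiv, ← Fin.snoc_comp_finSumFinEquiv, det_submatrix_comp_equiv]
  simp only [hbig, hone, det_submatrix_sumElim, det_fin_two, det_fin_one]
  simp only [submatrix_apply, Matrix.cons_val_zero, Matrix.cons_val_one]
  ring

theorem Matrix.det_submatrix_cons {m : ℕ} (M : Matrix α β R) (a : α) (r : Fin m → α)
    (c : Fin (m + 1) → β) :
    (M.submatrix (Fin.cons a r) c).det = (-1) ^ m * (M.submatrix (Fin.snoc r a) c).det := by
  have hrot : M.submatrix (Fin.snoc r a) c =
      (M.submatrix (Fin.cons a r) c).submatrix (finRotate (m + 1)) id := by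
    rw [Fin.snoc_eq_cons_rotate]; rfl
  rw [hrot, det_permute, sign_finRotate, ← mul_assoc]
  push_cast
  rw [← mul_pow, neg_one_mul, neg_neg, one_pow, one_mul]

/-- The Desnanot–Jacobi identity for the minor `M.submatrix r c` bordered by a first row `a`,
a last row `b` and two last columns `c₁`, `c₂`. -/
theorem Matrix.det_mul_det_submatrix_cons_snoc {m : ℕ} (M : Matrix α β R) (r : Fin m → α)
    (c : Fin m → β) (a b : α) (c₁ c₂ : β) (hD : IsUnit (M.submatrix r c).det) :
    (M.submatrix (Fin.cons a (Fin.snoc r b)) (Fin.snoc (Fin.snoc c c₁) c₂)).det *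
        (M.submatrix r c).det =
      (M.submatrix (Fin.cons a r) (Fin.snoc c c₁)).det *
          (M.submatrix (Fin.snoc r b) (Fin.snoc c c₂)).det -
        (M.submatrix (Fin.cons a r) (Fin.snoc c c₂)).det *
          (M.submatrix (Fin.snoc r b) (Fin.snoc c c₁)).det := by
  simp only [det_submatrix_cons]
  linear_combination (-1) ^ (m + 1) * det_mul_det_submatrix_snoc_snoc M r c b a c₁ c₂ hD

end DesnanotJacobi

section Casoratian

variable (q : ℝ)

noncomputable def casoratian {m : ℕ} (f : Fin m → ℝ → ℝ) (x : ℝ) : ℝ :=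
  (Matrix.of fun i j : Fin m => f j (q ^ (i : ℕ) * x)).det

theorem qWronskian_eq_prod_mul_casoratian (hq0 : q ≠ 0) {m : ℕ} (f : Fin m → ℝ → ℝ) {x : ℝ}
    (hx : x ≠ 0) :
    qWronskian q m f x = (∏ i : Fin m, qDerivCoeff q i i x) * casoratian q f x := by
  have hfactor : (Matrix.of fun i j : Fin m => (qDeriv q)^[(i : ℕ)] (f j) x) =
      Matrix.of (fun i k : Fin m => qDerivCoeff q i k x) *
        Matrix.of (fun i j : Fin m => f j (q ^ (i : ℕ) * x)) := by
    ext i j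
    rw [of_apply, iterate_qDeriv_apply_eq_sum q hq0 (f j) i.isLt hx, mul_apply,
      ← Fin.sum_univ_eq_sum_range (fun k => qDerivCoeff q i k x * f j (q ^ k * x))]
    rfl
  rw [qWronskian, hfactor, det_mul, casoratian,
    det_of_isLowerTriangular (of fun i k : Fin m => qDerivCoeff q i k x)
      fun i k hki => qDerivCoeff_eq_zero_of_lt q x hki]
  rfl

theorem Fin.cons_pow_mul {m : ℕ} (x : ℝ) :
    (Fin.cons x fun i : Fin m => q ^ (i : ℕ) * (q * x) : Fin (m + 1) → ℝ) =
      fun i : Fin (m + 1) => q ^ (i : ℕ) * x := by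
  ext i
  induction i using Fin.cases with
  | zero => simp
  | succ i => simp [pow_succ, mul_assoc]

theorem Fin.snoc_pow_mul {m : ℕ} (x : ℝ) :
    (Fin.snoc (fun i : Fin m => q ^ (i : ℕ) * x) (q ^ m * x) : Fin (m + 1) → ℝ) =
      fun i : Fin (m + 1) => q ^ (i : ℕ) * x := by
  ext i
  induction i using Fin.lastCases with
  | last => simp
  | cast i => simp

theorem casoratian_desnanotJacobi {m : ℕ} (f : Fin m → ℝ → ℝ) (g₁ g₂ : ℝ → ℝ) (x : ℝ)
    (hf : casoratian q f (q * x) ≠ 0) :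
    casoratian q (Fin.snoc (Fin.snoc f g₁) g₂) x * casoratian q f (q * x) =
      casoratian q (Fin.snoc f g₁) x * casoratian q (Fin.snoc f g₂) (q * x) -
        casoratian q (Fin.snoc f g₂) x * casoratian q (Fin.snoc f g₁) (q * x) := by
  -- Every Casoratian is a minor of the evaluation matrix `(y, g) ↦ g y`.
  let M : Matrix ℝ (ℝ → ℝ) ℝ := Matrix.of fun y g => g y
  have hM : ∀ {k : ℕ} (g : Fin k → ℝ → ℝ) (y : ℝ),
      casoratian q g y = (M.submatrix (fun i : Fin k => q ^ (i : ℕ) * y) g).det := fun _ _ => rfl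
  simp only [hM, ← Fin.cons_pow_mul q x, ← Fin.snoc_pow_mul q (q * x)]
  exact det_mul_det_submatrix_cons_snoc M _ f x _ g₁ g₂ (isUnit_iff_ne_zero.2 hf)

end Casoratian

section Darboux

variable {q : ℝ}

theorem qDarboux_apply {h : ℝ → ℝ} (g : ℝ → ℝ) {x : ℝ} (hx : h x ≠ 0) (hqx : h (q * x) ≠ 0) :
    qDarboux q h g x = (h x * g (q * x) - g x * h (q * x)) / (x * (q - 1) * h x) := by
  rw [qDarboux, qDeriv]
  field_simp

theorem qDarboux_of_casoratian_ratio (hq0 : q ≠ 0) (hq1 : q ≠ 1) {m : ℕ} (f : Fin m → ℝ → ℝ)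
    (g₁ g₂ h g : ℝ → ℝ) (hf : ∀ y, y ≠ 0 → casoratian q f y ≠ 0)
    (hfg₁ : ∀ y, y ≠ 0 → casoratian q (Fin.snoc f g₁) y ≠ 0)
    (hh : ∀ y, y ≠ 0 →
      h y = qDerivCoeff q m m y * casoratian q (Fin.snoc f g₁) y / casoratian q f y)
    (hg : ∀ y, y ≠ 0 →
      g y = qDerivCoeff q m m y * casoratian q (Fin.snoc f g₂) y / casoratian q f y)
    {x : ℝ} (hx : x ≠ 0) :
    qDarboux q h g x = qDerivCoeff q (m + 1) (m + 1) x *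
      casoratian q (Fin.snoc (Fin.snoc f g₁) g₂) x / casoratian q (Fin.snoc f g₁) x := by
  have hqx : q * x ≠ 0 := mul_ne_zero hq0 hx
  have hc := qDerivCoeff_self_ne_zero q hq0 hq1 m hx
  have hc' := qDerivCoeff_self_ne_zero q hq0 hq1 m hqx
  have hd : x * (q - 1) ≠ 0 := mul_ne_zero hx (sub_ne_zero.2 hq1)
  have hA := hf x hx
  have hA' := hf (q * x) hqx
  have hB := hfg₁ x hx
  have hB' := hfg₁ (q * x) hqx
  have hDJ := casoratian_desnanotJacobi q f g₁ g₂ x hA'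
  rw [qDarboux_apply g (by rw [hh x hx]; positivity) (by rw [hh _ hqx]; positivity),
    hh x hx, hh _ hqx, hg x hx, hg _ hqx, qDerivCoeff_succ_self]
  field_simp
  linear_combination -hDJ

theorem Fin.snoc_comp_val {α : Type*} (φ : ℕ → α) (m : ℕ) :
    (Fin.snoc (fun k : Fin m => φ k) (φ m) : Fin (m + 1) → α) = fun k : Fin (m + 1) => φ k :=
  Fin.snoc_init_self (fun k : Fin (m + 1) => φ k)

theorem qDarbouxFam_apply_eq_casoratian_ratio (hq0 : q ≠ 0) (hq1 : q ≠ 1) (Φ : ℕ → ℝ → ℝ)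
    (m : ℕ) (hΦ : ∀ i ≤ m, ∀ y, y ≠ 0 → casoratian q (fun k : Fin i => Φ (k + 1)) y ≠ 0)
    (j : ℕ) {x : ℝ} (hx : x ≠ 0) :
    qDarbouxFam q Φ m j x = qDerivCoeff q m m x *
      casoratian q (Fin.snoc (fun k : Fin m => Φ (k + 1)) (Φ j)) x /
        casoratian q (fun k : Fin m => Φ (k + 1)) x := by
  induction m generalizing j x with
  | zero => simp [qDarbouxFam, qDerivCoeff, casoratian, Fin.snoc]
  | succ m ih =>
    have hsnoc := Fin.snoc_comp_val (fun k => Φ (k + 1)) m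
    have ih' := ih (fun i hi => hΦ i (by omega))
    have hB := hΦ (m + 1) le_rfl
    rw [← hsnoc] at hB ⊢
    exact qDarboux_of_casoratian_ratio hq0 hq1 _ _ _ _ _ (hΦ m (by omega)) hB
      (fun y hy => ih' (m + 1) hy) (fun y hy => ih' j hy) hx

end Darboux

theorem qDarboux_iter_eq_wronskian_ratio_general (q : ℝ) (hq0 : q ≠ 0) (hq1 : q ≠ 1)
    (n : ℕ) (Φ : ℕ → ℝ → ℝ)
    (hW : ∀ i : ℕ, 1 ≤ i → i ≤ n → ∀ x : ℝ, x ≠ 0 →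
      qWronskian q i (fun j : Fin i => Φ ((j : ℕ) + 1)) x ≠ 0) :
    ∀ x : ℝ, x ≠ 0 →
      qDarbouxFam q Φ n (n + 1) x =
        qWronskian q (n + 1) (fun j : Fin (n + 1) => Φ ((j : ℕ) + 1)) x /
          qWronskian q n (fun j : Fin n => Φ ((j : ℕ) + 1)) x := by
  intro x hx
  have hcas : ∀ i ≤ n, ∀ y, y ≠ 0 → casoratian q (fun k : Fin i => Φ (k + 1)) y ≠ 0 := by
    intro i hi y hy
    rcases i.eq_zero_or_pos with rfl | hi0
    · simp [casoratian]
    · exact right_ne_zero_of_mul (qWronskian_eq_prod_mul_casoratian q hq0 _ hy ▸ hW i hi0 hi y hy)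
  have hprod : ∏ i : Fin n, qDerivCoeff q i i x ≠ 0 :=
    prod_ne_zero_iff.2 fun i _ => qDerivCoeff_self_ne_zero q hq0 hq1 i hx
  rw [qDarbouxFam_apply_eq_casoratian_ratio hq0 hq1 Φ n hcas (n + 1) hx,
    Fin.snoc_comp_val (fun k => Φ (k + 1)), qWronskian_eq_prod_mul_casoratian q hq0 _ hx,
    qWronskian_eq_prod_mul_casoratian q hq0 _ hx, Fin.prod_univ_castSucc]
  simp only [Fin.val_castSucc, Fin.val_last]
  rw [mul_assoc, mul_div_mul_left _ _ hprod]

/-- The n-fold Darboux transform of `φ = Φ (n+1)` generated by `φ_i = Φ i` (`i = 1,…,n`) is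
the ratio of q-Wronskians
`φ^{(n)}(x) = W_{n+1}^q(φ_1,…,φ_n,φ)(x) / W_n^q(φ_1,…,φ_n)(x)`. -/
theorem qDarboux_iter_eq_wronskian_ratio (q : ℝ) (hq0 : q ≠ 0) (hq1 : q ≠ 1)
    (n : ℕ) (hn : 1 ≤ n) (Φ : ℕ → ℝ → ℝ)
    (hW : ∀ i : ℕ, 1 ≤ i → i ≤ n → ∀ x : ℝ, x ≠ 0 →
      qWronskian q i (fun j : Fin i => Φ ((j : ℕ) + 1)) x ≠ 0) :
    ∀ x : ℝ, x ≠ 0 →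
      qDarbouxFam q Φ n (n + 1) x =
        qWronskian q (n + 1) (fun j : Fin (n + 1) => Φ ((j : ℕ) + 1)) x /
          qWronskian q n (fun j : Fin n => Φ ((j : ℕ) + 1)) x :=
  qDarboux_iter_eq_wronskian_ratio_general q hq0 hq1 n Φ hW
end

section
/- Let q be a real number with q ≠ 0 and q ≠ 1, let N ≥ 1 and M ≥ 0, and let φ_1, …, φ_N, f_1, …, f_{M+1} : ℝ → ℝ. Assume the q-Wronskian W_N^q(φ_1, …, φ_N)(x) ≠ 0 for all x ≠ 0. Then for every x ≠ 0 the q-Wronskian identity holds: W_{M+1}^q( W_{N+1}^q(φ_1,…,φ_N,f_1)/W_N^q(φ_1,…,φ_N), …, W_{N+1}^q(φ_1,…,φ_N,f_{M+1})/W_N^q(φ_1,…,φ_N) )(x) = W_{N+M+1}^q(φ_1, …, φ_N, f_1, …, f_{M+1})(x) / W_N^q(φ_1, …, φ_N)(x). -/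
lemma qDeriv_iter_shift (q : ℝ) (hq1 : q ≠ 1) (j : ℕ) (g : ℝ → ℝ) (y : ℝ) (hy : y ≠ 0) :
    (qDeriv q)^[j] g (q * y) =
      (qDeriv q)^[j] g y + (y * (q - 1)) * (qDeriv q)^[j + 1] g y := by
  have h : (qDeriv q)^[j + 1] g = qDeriv q ((qDeriv q)^[j] g) :=
    Function.iterate_succ_apply' _ _ _
  have hc : y * (q - 1) ≠ 0 := mul_ne_zero hy (sub_ne_zero.mpr hq1)
  rw [h]
  show _ = _ + y * (q - 1) * (((qDeriv q)^[j] g (q * y) - (qDeriv q)^[j] g y) / (y * (q - 1)))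
  rw [mul_div_cancel₀ _ hc]
  ring

lemma qDeriv_zero_fn (q : ℝ) : qDeriv q (fun _ => 0) = fun _ => 0 := by
  funext y; simp [qDeriv]

lemma qDeriv_iter_zero_fn (q : ℝ) (i : ℕ) : (qDeriv q)^[i] (fun _ => 0) = fun _ => 0 :=
  Function.iterate_fixed (qDeriv_zero_fn q) i

lemma snoc_expand (q : ℝ) (N : ℕ) (φ : Fin N → ℝ → ℝ) (f : ℝ → ℝ) (y : ℝ) :
    qWronskian q (N + 1) (Fin.snoc φ f) y
      = ∑ r : Fin (N + 1), (-1 : ℝ) ^ ((r : ℕ) + N) * (qDeriv q)^[(r : ℕ)] f y *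
          Matrix.det (Matrix.of fun (i t : Fin N) =>
            (qDeriv q)^[((r.succAbove i : Fin (N + 1)) : ℕ)] (φ t) y) := by
  rw [qWronskian, Matrix.det_succ_column _ (Fin.last N)]
  refine Finset.sum_congr rfl fun r _ => ?_
  have h1 : Matrix.of (fun (i j : Fin (N+1)) => (qDeriv q)^[(i:ℕ)] ((Fin.snoc φ f : Fin (N+1) → ℝ → ℝ) j) y) r (Fin.last N)
      = (qDeriv q)^[(r : ℕ)] f y := by simp
  have h2 : ((Matrix.of fun (i j : Fin (N+1)) => (qDeriv q)^[(i:ℕ)] ((Fin.snoc φ f : Fin (N+1) → ℝ → ℝ) j) y).submatrix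
        r.succAbove (Fin.last N).succAbove)
      = Matrix.of fun (i t : Fin N) => (qDeriv q)^[((r.succAbove i : Fin (N + 1)) : ℕ)] (φ t) y := by
    ext k t
    simp [Fin.succAbove_last, Matrix.submatrix_apply]
  rw [h1, h2, Fin.val_last]

lemma rep (q : ℝ) (hq0 : q ≠ 0) (hq1 : q ≠ 1) (N : ℕ) (φ : Fin N → ℝ → ℝ)
    (hW : ∀ y : ℝ, y ≠ 0 → qWronskian q N φ y ≠ 0) (i : ℕ) :
    ∃ a : ℕ → ℝ → ℝ,
      (∀ r y, N + i < r → a r y = 0) ∧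
      (∀ y, y ≠ 0 → a (N + i) y = 1) ∧
      (∀ (f : ℝ → ℝ) (y : ℝ), y ≠ 0 →
        (qDeriv q)^[i] (fun z => qWronskian q (N + 1) (Fin.snoc φ f) z / qWronskian q N φ z) y
          = ∑ r ∈ Finset.range (N + i + 1), a r y * (qDeriv q)^[r] f y) := by
  induction i with
  | zero =>
    refine ⟨fun r y => if h : r < N + 1 then
        ((-1 : ℝ) ^ (r + N) * Matrix.det (Matrix.of fun (i t : Fin N) =>
          (qDeriv q)^[(((⟨r, h⟩ : Fin (N + 1)).succAbove i : Fin (N + 1)) : ℕ)] (φ t) y))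
          / qWronskian q N φ y
      else 0, ?_, ?_, ?_⟩
    · intro r y hr
      dsimp only
      rw [dif_neg (by omega)]
    · intro y hy
      dsimp only
      rw [dif_pos (by omega : N + 0 < N + 1)]
      have he : (⟨N + 0, by omega⟩ : Fin (N + 1)) = Fin.last N := by
        ext; simp
      have hm : Matrix.det (Matrix.of fun (i t : Fin N) =>
          (qDeriv q)^[(((⟨N + 0, by omega⟩ : Fin (N + 1)).succAbove i : Fin (N + 1)) : ℕ)] (φ t) y)
          = qWronskian q N φ y := by
        rw [qWronskian]
        congr 1
        ext k t
        rw [he, Fin.succAbove_last]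
        simp
      rw [hm]
      have hsgn : (-1 : ℝ) ^ (N + 0 + N) = 1 := Even.neg_one_pow ⟨N, by omega⟩
      rw [hsgn, one_mul, div_self (hW y hy)]
    · intro f y hy
      rw [Function.iterate_zero_apply]
      rw [← Fin.sum_univ_eq_sum_range
        (fun r => (if h : r < N + 1 then
          ((-1 : ℝ) ^ (r + N) * Matrix.det (Matrix.of fun (i t : Fin N) =>
            (qDeriv q)^[(((⟨r, h⟩ : Fin (N + 1)).succAbove i : Fin (N + 1)) : ℕ)] (φ t) y))
            / qWronskian q N φ y
          else 0) * (qDeriv q)^[r] f y) (N + 0 + 1)]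
      rw [snoc_expand, Finset.sum_div]
      refine Finset.sum_congr rfl fun r _ => ?_
      rw [dif_pos r.isLt]
      have : (⟨(r : ℕ), r.isLt⟩ : Fin (N + 1)) = r := rfl
      rw [this, div_mul_eq_mul_div]
      ring_nf
  | succ i ih =>
    obtain ⟨a, h0, h1, h2⟩ := ih
    set c : ℝ → ℝ := fun y => y * (q - 1) with hc
    refine ⟨fun r y => qDeriv q (a r) y +
        (match r with | 0 => 0 | Nat.succ s => a s (q * y)), ?_, ?_, ?_⟩
    · intro r y hr
      match r, hr with
      | Nat.succ s, hr =>
        have hz1 : a (s + 1) = fun _ => (0 : ℝ) := funext fun z => h0 _ z (by omega)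
        have hz2 : a s (q * y) = 0 := h0 _ _ (by omega)
        simp [hz1, hz2, qDeriv]
    · intro y hy
      have hz1 : a (N + (i + 1)) = fun _ => (0 : ℝ) := funext fun z => h0 _ z (by omega)
      have : (N + (i + 1)) = (N + i) + 1 := by omega
      rw [this]
      show qDeriv q (a (N + i + 1)) y + a (N + i) (q * y) = 1
      have hz1 : a (N + i + 1) = fun _ => (0 : ℝ) := funext fun z => h0 _ z (by omega)
      rw [hz1, h1 (q * y) (mul_ne_zero hq0 hy)]
      simp [qDeriv]
    · intro f y hy
      have hcy : y * (q - 1) ≠ 0 := mul_ne_zero hy (sub_ne_zero.mpr hq1)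
      have hqy : q * y ≠ 0 := mul_ne_zero hq0 hy
      set G : ℝ → ℝ := fun z => qWronskian q (N + 1) (Fin.snoc φ f) z / qWronskian q N φ z with hG
      have hit : (qDeriv q)^[i + 1] G y
          = ((qDeriv q)^[i] G (q * y) - (qDeriv q)^[i] G y) / (y * (q - 1)) := by
        rw [Function.iterate_succ_apply' (qDeriv q) i G]
        rfl
      rw [hit, h2 f (q * y) hqy, h2 f y hy]
      have hshift : ∀ r ∈ Finset.range (N + i + 1),
          a r (q * y) * (qDeriv q)^[r] f (q * y)
            = a r (q * y) * (qDeriv q)^[r] f y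
              + (y * (q - 1)) * (a r (q * y) * (qDeriv q)^[r + 1] f y) := by
        intro r _
        rw [qDeriv_iter_shift q hq1 r f y hy]
        ring
      rw [Finset.sum_congr rfl hshift, Finset.sum_add_distrib, ← Finset.mul_sum]
      -- RHS decomposition
      have hrhs : ∑ r ∈ Finset.range (N + (i + 1) + 1),
          (qDeriv q (a r) y + (match r with | 0 => 0 | Nat.succ s => a s (q * y)))
            * (qDeriv q)^[r] f y
          = (∑ r ∈ Finset.range (N + i + 1), (a r (q * y) - a r y) / (y * (q - 1))
              * (qDeriv q)^[r] f y)
            + ∑ r ∈ Finset.range (N + i + 1), a r (q * y) * (qDeriv q)^[r + 1] f y := by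
        have hsplit : ∀ r ∈ Finset.range (N + (i + 1) + 1),
            (qDeriv q (a r) y + (match r with | 0 => 0 | Nat.succ s => a s (q * y)))
              * (qDeriv q)^[r] f y
            = qDeriv q (a r) y * (qDeriv q)^[r] f y
              + (match r with | 0 => (0:ℝ) | Nat.succ s => a s (q * y)) * (qDeriv q)^[r] f y := by
          intro r _; ring
        rw [Finset.sum_congr rfl hsplit, Finset.sum_add_distrib]
        congr 1
        · -- first sum: drop last term, rewrite qDeriv
          have : N + (i + 1) + 1 = (N + i + 1) + 1 := by omega
          rw [this, Finset.sum_range_succ]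
          have hz : a (N + i + 1) = fun _ => (0 : ℝ) := funext fun z => h0 _ z (by omega)
          have hlast : qDeriv q (a (N + i + 1)) y = 0 := by simp [hz, qDeriv]
          rw [hlast, zero_mul, add_zero]
          refine Finset.sum_congr rfl fun r _ => ?_
          rfl
        · -- second sum: shift index
          have : N + (i + 1) + 1 = (N + i + 1) + 1 := by omega
          rw [this, Finset.sum_range_succ']
          simp only [zero_mul, add_zero]
      rw [hrhs, sub_div, add_div, mul_div_cancel_left₀ _ hcy]
      have key : (∑ r ∈ Finset.range (N + i + 1), a r (q * y) * (qDeriv q)^[r] f y) / (y * (q - 1))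
          - (∑ r ∈ Finset.range (N + i + 1), a r y * (qDeriv q)^[r] f y) / (y * (q - 1))
          = ∑ r ∈ Finset.range (N + i + 1),
              (a r (q * y) - a r y) / (y * (q - 1)) * (qDeriv q)^[r] f y := by
        rw [div_sub_div_same, ← Finset.sum_sub_distrib, Finset.sum_div]
        refine Finset.sum_congr rfl fun r _ => ?_
        rw [div_mul_eq_mul_div, sub_mul]
      linarith [key]

/-- The q-Wronskian identity:
`W_{M+1}^q(W_{N+1}^q(φ,f_1)/W_N^q(φ), …, W_{N+1}^q(φ,f_{M+1})/W_N^q(φ))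
  = W_{N+M+1}^q(φ_1,…,φ_N,f_1,…,f_{M+1}) / W_N^q(φ_1,…,φ_N)`. -/
theorem qWronskian_identity (q : ℝ) (hq0 : q ≠ 0) (hq1 : q ≠ 1)
    (N M : ℕ) (hN : 1 ≤ N) (φ : Fin N → ℝ → ℝ) (f : Fin (M + 1) → ℝ → ℝ)
    (hW : ∀ x : ℝ, x ≠ 0 → qWronskian q N φ x ≠ 0) :
    ∀ x : ℝ, x ≠ 0 →
      qWronskian q (M + 1)
        (fun j : Fin (M + 1) => fun y =>
          qWronskian q (N + 1) (Fin.snoc φ (f j)) y / qWronskian q N φ y) x =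
      qWronskian q (N + (M + 1)) (Fin.append φ f) x / qWronskian q N φ x := by
  intro x hx
  classical
  obtain ⟨a, h0, h1, h2⟩ : ∃ a : ℕ → ℕ → ℝ → ℝ,
      (∀ k r y, N + k < r → a k r y = 0) ∧
      (∀ k y, y ≠ 0 → a k (N + k) y = 1) ∧
      (∀ k (g : ℝ → ℝ) (y : ℝ), y ≠ 0 →
        (qDeriv q)^[k] (fun z => qWronskian q (N + 1) (Fin.snoc φ g) z / qWronskian q N φ z) y
          = ∑ r ∈ Finset.range (N + k + 1), a k r y * (qDeriv q)^[r] g y) := by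
    choose a ha hb hc using rep q hq0 hq1 N φ hW
    exact ⟨a, ha, hb, hc⟩
  set T := N + (M + 1) with hT
  let P : Matrix (Fin T) (Fin T) ℝ :=
    Matrix.of fun r c => (qDeriv q)^[(r : ℕ)] (Fin.append φ f c) x
  let A : Matrix (Fin T) (Fin T) ℝ :=
    Matrix.of fun i r =>
      if (i : ℕ) < N then (if r = i then 1 else 0) else a ((i : ℕ) - N) (r : ℕ) x
  -- A is lower triangular with unit diagonal
  have hAtri : ∀ i j : Fin T, (i : ℕ) < (j : ℕ) → A i j = 0 := by
    intro i j hij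
    show (if (i : ℕ) < N then (if j = i then 1 else 0) else a ((i : ℕ) - N) (j : ℕ) x) = 0
    by_cases h : (i : ℕ) < N
    · rw [if_pos h, if_neg (by intro hji; rw [hji] at hij; omega)]
    · rw [if_neg h]
      exact h0 _ _ _ (by omega)
  have hAdiag : ∀ i : Fin T, A i i = 1 := by
    intro i
    show (if (i : ℕ) < N then (if i = i then 1 else 0) else a ((i : ℕ) - N) (i : ℕ) x) = 1
    by_cases h : (i : ℕ) < N
    · rw [if_pos h, if_pos rfl]
    · rw [if_neg h]
      calc a ((i : ℕ) - N) (i : ℕ) x = a ((i : ℕ) - N) (N + ((i : ℕ) - N)) x := by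
            congr 1; omega
        _ = 1 := h1 _ x hx
  have hdetA : A.det = 1 := by
    rw [Matrix.det_of_lowerTriangular A ?_]
    · exact Finset.prod_eq_one fun i _ => hAdiag i
    · intro i j hij
      exact hAtri i j (by exact hij)
  -- rows of A * P for i ≥ N
  have hrow : ∀ (k : ℕ), k ≤ M → ∀ g : ℝ → ℝ,
      (∑ r : Fin T, a k (r : ℕ) x * (qDeriv q)^[(r : ℕ)] g x)
        = (qDeriv q)^[k]
            (fun z => qWronskian q (N + 1) (Fin.snoc φ g) z / qWronskian q N φ z) x := by
    intro k hk g
    rw [Fin.sum_univ_eq_sum_range (fun r => a k r x * (qDeriv q)^[r] g x) T, h2 k g x hx]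
    symm
    refine Finset.sum_subset (Finset.range_subset_range.mpr (by omega)) ?_
    intro r _ hr
    rw [h0 k r x (by simp only [Finset.mem_range] at hr; omega), zero_mul]
  -- quotient by φ t is the zero function
  have hGzero : ∀ t : Fin N,
      (fun z => qWronskian q (N + 1) (Fin.snoc φ (φ t)) z / qWronskian q N φ z)
        = fun _ => (0 : ℝ) := by
    intro t
    funext z
    have : qWronskian q (N + 1) (Fin.snoc φ (φ t)) z = 0 := by
      refine Matrix.det_zero_of_column_eq (i := Fin.castSucc t) (j := Fin.last N) ?_ ?_
      · exact (Fin.castSucc_lt_last t).ne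
      · intro k
        simp
    rw [this, zero_div]
  -- the product matrix via the block decomposition
  let e := finSumFinEquiv (m := N) (n := M + 1)
  let X : Matrix (Fin N) (Fin N) ℝ := Matrix.of fun i t => (qDeriv q)^[(i : ℕ)] (φ t) x
  let Y : Matrix (Fin N) (Fin (M + 1)) ℝ := Matrix.of fun i j => (qDeriv q)^[(i : ℕ)] (f j) x
  let Z : Matrix (Fin (M + 1)) (Fin (M + 1)) ℝ := Matrix.of fun k j =>
    (qDeriv q)^[(k : ℕ)]
      (fun z => qWronskian q (N + 1) (Fin.snoc φ (f j)) z / qWronskian q N φ z) x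
  have hApick : ∀ (i : Fin N) (c : Fin T), (A * P) (Fin.castAdd (M + 1) i) c
      = P (Fin.castAdd (M + 1) i) c := by
    intro i c
    rw [Matrix.mul_apply]
    rw [Finset.sum_eq_single (Fin.castAdd (M + 1) i)]
    · show (if ((Fin.castAdd (M + 1) i : Fin T) : ℕ) < N then _ else _) * _ = _
      rw [if_pos (by simp [Fin.castAdd]), if_pos rfl, one_mul]
    · intro r _ hr
      show (if _ < N then (if r = Fin.castAdd (M + 1) i then (1:ℝ) else 0) else _) * _ = 0
      rw [if_pos (by simp [Fin.castAdd]), if_neg hr, zero_mul]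
    · intro h
      exact absurd (Finset.mem_univ _) h
  have hAmix : ∀ (k : Fin (M + 1)) (c : Fin T), (A * P) (Fin.natAdd N k) c
      = ∑ r : Fin T, a (k : ℕ) (r : ℕ) x * (qDeriv q)^[(r : ℕ)] (Fin.append φ f c) x := by
    intro k c
    rw [Matrix.mul_apply]
    refine Finset.sum_congr rfl fun r _ => ?_
    congr 1
    show (if ((Fin.natAdd N k : Fin T) : ℕ) < N then _ else
        a (((Fin.natAdd N k : Fin T) : ℕ) - N) (r : ℕ) x) = a (k : ℕ) (r : ℕ) x
    rw [if_neg (by simp [Fin.natAdd])]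
    congr 1
    simp [Fin.natAdd]
  have hsub : (A * P).submatrix e e = Matrix.fromBlocks X Y 0 Z := by
    ext i c
    cases i with
    | inl i =>
      cases c with
      | inl t =>
        show (A * P) (e (Sum.inl i)) (e (Sum.inl t)) = X i t
        rw [finSumFinEquiv_apply_left, finSumFinEquiv_apply_left, hApick]
        show (qDeriv q)^[((Fin.castAdd (M+1) i : Fin T) : ℕ)]
            (Fin.append φ f (Fin.castAdd (M+1) t)) x = _
        rw [Fin.append_left]
        rfl
      | inr j =>
        show (A * P) (e (Sum.inl i)) (e (Sum.inr j)) = Y i j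
        rw [finSumFinEquiv_apply_left, finSumFinEquiv_apply_right, hApick]
        show (qDeriv q)^[((Fin.castAdd (M+1) i : Fin T) : ℕ)]
            (Fin.append φ f (Fin.natAdd N j)) x = _
        rw [Fin.append_right]
        rfl
    | inr k =>
      cases c with
      | inl t =>
        show (A * P) (e (Sum.inr k)) (e (Sum.inl t)) = 0
        rw [finSumFinEquiv_apply_right, finSumFinEquiv_apply_left, hAmix]
        have hcol : ∀ r : Fin T, (qDeriv q)^[(r : ℕ)] (Fin.append φ f (Fin.castAdd (M+1) t)) x
            = (qDeriv q)^[(r : ℕ)] (φ t) x := by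
          intro r; rw [Fin.append_left]
        simp_rw [hcol]
        rw [hrow (k : ℕ) (by omega) (φ t), hGzero t, qDeriv_iter_zero_fn]
      | inr j =>
        show (A * P) (e (Sum.inr k)) (e (Sum.inr j)) = Z k j
        rw [finSumFinEquiv_apply_right, finSumFinEquiv_apply_right, hAmix]
        have hcol : ∀ r : Fin T, (qDeriv q)^[(r : ℕ)] (Fin.append φ f (Fin.natAdd N j)) x
            = (qDeriv q)^[(r : ℕ)] (f j) x := by
          intro r; rw [Fin.append_right]
        simp_rw [hcol]
        rw [hrow (k : ℕ) (by omega) (f j)]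
        rfl
  -- putting it together
  have hdet1 : P.det = X.det * Z.det := by
    have h3 : ((A * P).submatrix e e).det = (A * P).det :=
      Matrix.det_submatrix_equiv_self e (A * P)
    have h4 : (A * P).det = P.det := by rw [Matrix.det_mul, hdetA, one_mul]
    rw [← h4, ← h3, hsub, Matrix.det_fromBlocks_zero₂₁]
  have hPdet : P.det = qWronskian q T (Fin.append φ f) x := rfl
  have hXdet : X.det = qWronskian q N φ x := rfl
  have hZdet : Z.det = qWronskian q (M + 1)
      (fun j : Fin (M + 1) => fun y =>
        qWronskian q (N + 1) (Fin.snoc φ (f j)) y / qWronskian q N φ y) x := rfl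
  have hXne : X.det ≠ 0 := by rw [hXdet]; exact hW x hx
  rw [← hZdet, ← hXdet, ← hPdet, hdet1, mul_comm, mul_div_assoc, div_self hXne, mul_one]
end

section
/- Let q be a real number with q ≠ 0 and q ≠ 1, let l ≥ 1, let λ_1, λ_2, λ_3, λ_4 be real numbers, and let f_1, f_2, f_3, f_4 : ℝ → ℝ satisfy (∂_q f_j)(x) = λ_j · f_j(x) for all x ≠ 0. Set φ_1 = f_1 + f_4 and φ_2 = f_2 + f_3. Then for every x ≠ 0: W_4^q(φ_1, φ_2, ∂_q^l φ_1, ∂_q^l φ_2)(x) = (λ_4^l − λ_1^l)(λ_2^l − λ_3^l) · (∏_{1 ≤ i < j ≤ 4} (λ_j − λ_i)) · f_1(x) f_2(x) f_3(x) f_4(x). -/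
open Matrix

theorem qDeriv_add (q : ℝ) (f g : ℝ → ℝ) : qDeriv q (f + g) = qDeriv q f + qDeriv q g := by
  ext x
  simp only [qDeriv, Pi.add_apply]
  ring

theorem qDeriv_const_smul (q c : ℝ) (f : ℝ → ℝ) : qDeriv q (c • f) = c • qDeriv q f := by
  ext x
  simp only [qDeriv, Pi.smul_apply, smul_eq_mul]
  ring

theorem qDeriv_iterate_add (q : ℝ) (k : ℕ) (f g : ℝ → ℝ) :
    (qDeriv q)^[k] (f + g) = (qDeriv q)^[k] f + (qDeriv q)^[k] g := by
  induction k generalizing f g with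
  | zero => rfl
  | succ k ih => simp only [Function.iterate_succ_apply, qDeriv_add, ih]

theorem qDeriv_congr_of_forall_ne_zero {q : ℝ} (hq : q ≠ 0) {f g : ℝ → ℝ}
    (hfg : ∀ y ≠ 0, f y = g y) {x : ℝ} (hx : x ≠ 0) : qDeriv q f x = qDeriv q g x := by
  simp only [qDeriv, hfg x hx, hfg (q * x) (mul_ne_zero hq hx)]

theorem qDeriv_iterate_apply_of_eigen {q : ℝ} (hq : q ≠ 0) {f : ℝ → ℝ} {c : ℝ}
    (hf : ∀ x ≠ 0, qDeriv q f x = c * f x) (k : ℕ) {x : ℝ} (hx : x ≠ 0) :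
    (qDeriv q)^[k] f x = c ^ k * f x := by
  induction k generalizing x with
  | zero => simp
  | succ k ih =>
    rw [Function.iterate_succ_apply',
      qDeriv_congr_of_forall_ne_zero hq (g := c ^ k • f) (fun y hy => ih hy) hx,
      qDeriv_const_smul, Pi.smul_apply, hf x hx, smul_eq_mul, pow_succ]
    ring

theorem qDeriv_iterate_add_apply_of_eigen {q : ℝ} (hq : q ≠ 0) {f g : ℝ → ℝ} {a b : ℝ}
    (hf : ∀ x ≠ 0, qDeriv q f x = a * f x) (hg : ∀ x ≠ 0, qDeriv q g x = b * g x)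
    (k : ℕ) {x : ℝ} (hx : x ≠ 0) :
    (qDeriv q)^[k] (fun y => f y + g y) x = a ^ k * f x + b ^ k * g x := by
  rw [show (fun y => f y + g y) = f + g from rfl, qDeriv_iterate_add, Pi.add_apply,
    qDeriv_iterate_apply_of_eigen hq hf k hx, qDeriv_iterate_apply_of_eigen hq hg k hx]

theorem qWronskian_eq_det_vandermonde_mul_det {n : ℕ} (q : ℝ) (φ : Fin n → ℝ → ℝ) (x : ℝ)
    (c : Fin n → ℝ) (B : Matrix (Fin n) (Fin n) ℝ)
    (h : ∀ i j : Fin n, (qDeriv q)^[i] (φ j) x = ∑ k, c k ^ (i : ℕ) * B k j) :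
    qWronskian q n φ x = (vandermonde c).det * B.det := by
  rw [qWronskian, ← det_transpose (vandermonde c), ← det_mul]
  congr 1
  ext i j
  simp [h, mul_apply]

theorem det_vandermonde_fin_four (a b c d : ℝ) :
    (vandermonde ![a, b, c, d]).det =
      (b - a) * (c - a) * (d - a) * (c - b) * (d - b) * (d - c) := by
  simp [det_vandermonde, Fin.prod_univ_succ, Fin.prod_Ioi_succ]
  ring

theorem det_fin_four_of_paired_supports (a b c d s t u v : ℝ) :
    !![a, 0, s * a, 0; 0, b, 0, t * b; 0, c, 0, u * c; d, 0, v * d, 0].det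
      = (v - s) * (t - u) * (a * b * c * d) := by
  simp [det_succ_row_zero, Fin.sum_univ_succ, Fin.succAbove]
  ring

theorem qWronskian_constraint_example_general (q : ℝ) (hq0 : q ≠ 0)
    (l : ℕ) (l1 l2 l3 l4 : ℝ) (f1 f2 f3 f4 : ℝ → ℝ)
    (h1 : ∀ x : ℝ, x ≠ 0 → qDeriv q f1 x = l1 * f1 x)
    (h2 : ∀ x : ℝ, x ≠ 0 → qDeriv q f2 x = l2 * f2 x)
    (h3 : ∀ x : ℝ, x ≠ 0 → qDeriv q f3 x = l3 * f3 x)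
    (h4 : ∀ x : ℝ, x ≠ 0 → qDeriv q f4 x = l4 * f4 x) :
    ∀ x : ℝ, x ≠ 0 →
      qWronskian q 4
        ![fun y => f1 y + f4 y, fun y => f2 y + f3 y,
          (qDeriv q)^[l] (fun y => f1 y + f4 y),
          (qDeriv q)^[l] (fun y => f2 y + f3 y)] x =
      (l4 ^ l - l1 ^ l) * (l2 ^ l - l3 ^ l) *
        ((l2 - l1) * (l3 - l1) * (l4 - l1) * (l3 - l2) * (l4 - l2) * (l4 - l3)) *
        (f1 x * f2 x * f3 x * f4 x) := by
  intro x hx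
  have hφ₁ := fun k => qDeriv_iterate_add_apply_of_eigen hq0 h1 h4 k hx
  have hφ₂ := fun k => qDeriv_iterate_add_apply_of_eigen hq0 h2 h3 k hx
  rw [qWronskian_eq_det_vandermonde_mul_det q _ x ![l1, l2, l3, l4]
      !![f1 x, 0, l1 ^ l * f1 x, 0; 0, f2 x, 0, l2 ^ l * f2 x;
        0, f3 x, 0, l3 ^ l * f3 x; f4 x, 0, l4 ^ l * f4 x, 0],
    det_vandermonde_fin_four, det_fin_four_of_paired_supports]
  · ring
  · intro i j
    fin_cases j <;>
      simp [Fin.sum_univ_four, ← Function.iterate_add_apply, hφ₁, hφ₂, pow_add] <;> ring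

/-- For q-eigenfunctions `∂_q f_j = λ_j f_j` and `φ_1 = f_1 + f_4`, `φ_2 = f_2 + f_3`:
`W_4^q(φ_1,φ_2,∂_q^l φ_1,∂_q^l φ_2)(x)
 = (λ_4^l − λ_1^l)(λ_2^l − λ_3^l)·∏_{1≤i<j≤4}(λ_j − λ_i)·f_1(x)f_2(x)f_3(x)f_4(x)`. -/
theorem qWronskian_constraint_example (q : ℝ) (hq0 : q ≠ 0) (hq1 : q ≠ 1)
    (l : ℕ) (hl : 1 ≤ l) (l1 l2 l3 l4 : ℝ) (f1 f2 f3 f4 : ℝ → ℝ)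
    (h1 : ∀ x : ℝ, x ≠ 0 → qDeriv q f1 x = l1 * f1 x)
    (h2 : ∀ x : ℝ, x ≠ 0 → qDeriv q f2 x = l2 * f2 x)
    (h3 : ∀ x : ℝ, x ≠ 0 → qDeriv q f3 x = l3 * f3 x)
    (h4 : ∀ x : ℝ, x ≠ 0 → qDeriv q f4 x = l4 * f4 x) :
    ∀ x : ℝ, x ≠ 0 →
      qWronskian q 4
        ![fun y => f1 y + f4 y, fun y => f2 y + f3 y,
          (qDeriv q)^[l] (fun y => f1 y + f4 y),
          (qDeriv q)^[l] (fun y => f2 y + f3 y)] x =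
      (l4 ^ l - l1 ^ l) * (l2 ^ l - l3 ^ l) *
        ((l2 - l1) * (l3 - l1) * (l4 - l1) * (l3 - l2) * (l4 - l2) * (l4 - l3)) *
        (f1 x * f2 x * f3 x * f4 x) :=
  qWronskian_constraint_example_general q hq0 l l1 l2 l3 l4 f1 f2 f3 f4 h1 h2 h3 h4
end
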